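/- arXiv:2404.18280 — 5 statements merged into one kernel-verified Lean document; each statement's English description precedes it below -/
import Mathlib

section
/- Let T = { t : ℕ → Bool | t 0 = false }. There is no function f : (ℕ → Bool) → (ℕ → Bool) that is continuous on T (with respect to the product topology on ℕ → Bool, Bool discrete) and satisfies: for every t ∈ T, f t ∈ T and ( (∃ n, t n = true) ↔ (f t) 1 = true ). (This is the topological core of the theorem that there exist a HyperLTL sentence ∀π ∃π′. (F a_π) ↔ (X a_{π′}) and a transition system with trace set T whose satisfaction is not witnessed by any computable — hence continuous — Skolem function.) -/
open Filter Function Topology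

/-! The answer `f t 1` of a Skolem function would be a continuous function of `t` on `T` deciding
whether `t` ever takes the value `true`. This is impossible: the traces carrying a single `true`
at a far-away position converge to the all-`false` trace, yet the decision is `true` for each of
them and `false` at the limit, and a continuous map into the discrete space `Bool` is locally
constant. -/

theorem tendsto_update_cofinite_nhds {ι : Type*} [DecidableEq ι] {X : Type*} [TopologicalSpace X]
    (x : ι → X) (c : X) : Tendsto (fun i => update x i c) cofinite (𝓝 x) := by
  refine tendsto_pi_nhds.mpr fun n => tendsto_nhds_of_eventually_eq ?_
  filter_upwards [eventually_cofinite_ne n] with i hi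
  exact update_of_ne hi.symm c x

theorem not_continuousWithinAt_of_forall_eq_true_iff_exists {g : (ℕ → Bool) → Bool}
    (hg : ∀ t ∈ {t : ℕ → Bool | t 0 = false}, g t = true ↔ ∃ n, t n = true) :
    ¬ ContinuousWithinAt g {t : ℕ → Bool | t 0 = false} (fun _ => false) := by
  intro hcont
  have hlim : Tendsto (fun i => update (fun _ => false) i true) cofinite
      (𝓝[{t : ℕ → Bool | t 0 = false}] fun _ => false) := by
    refine tendsto_nhdsWithin_iff.mpr ⟨tendsto_update_cofinite_nhds _ true, ?_⟩
    filter_upwards [eventually_cofinite_ne 0] with i hi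
    simp [hi.symm]
  have hconst := hcont.tendsto.comp hlim
  rw [nhds_discrete, tendsto_pure] at hconst
  obtain ⟨i, hi, hgi⟩ := ((eventually_cofinite_ne 0).and hconst).exists
  have htrue : g (update (fun _ => false) i true) = true :=
    (hg _ (by simp [hi.symm])).mpr ⟨i, by simp⟩
  have hfalse : g (fun _ => false) = false :=
    Bool.eq_false_iff.mpr fun h => by simpa using (hg _ rfl).mp h
  rw [comp_apply, hfalse] at hgi
  exact Bool.false_ne_true (hgi.symm.trans htrue)

/-- With `T = { t : ℕ → Bool | t 0 = false }`, there is no function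
`f : (ℕ → Bool) → (ℕ → Bool)` continuous on `T` (product topology, `Bool` discrete)
such that for every `t ∈ T`, `f t ∈ T` and `(∃ n, t n = true) ↔ (f t) 1 = true`.
(Topological core of: no continuous — hence no computable — Skolem function witnesses
`𝔗 ⊨ ∀π ∃π′. (F a_π) ↔ (X a_{π′})` for the trace set `∅(2^{a})^ω`.) -/
theorem no_continuous_skolem :
    ¬ ∃ f : (ℕ → Bool) → (ℕ → Bool),
      ContinuousOn f {t : ℕ → Bool | t 0 = false} ∧
      ∀ t ∈ {t : ℕ → Bool | t 0 = false},
        f t ∈ {t : ℕ → Bool | t 0 = false} ∧ ((∃ n, t n = true) ↔ (f t) 1 = true) := by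
  rintro ⟨f, hf, hspec⟩
  exact not_continuousWithinAt_of_forall_eq_true_iff_exists (fun t ht => (hspec t ht).2.symm)
    ((continuous_apply 1).continuousAt.comp_continuousWithinAt (hf _ rfl))
end

section
/- Let T = { t : ℕ → Bool | t 0 = false }. There is no d ∈ ℕ and no function f : (ℕ → Bool) → (ℕ → Bool) such that both: (i) f has delay d on T, i.e., for all t, t′ ∈ T and all n ∈ ℕ, if t k = t′ k for all k < n + d then (f t) k = (f t′) k for all k < n; and (ii) for every t ∈ T, f t ∈ T and ( (∃ n, t n = true) ↔ (f t) 1 = true ). -/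
/-!
The output letter `f t 1` is fixed by the first `2 + d` input letters. The all-`false` word and
the word whose only `true` sits at position `2 + d` agree there, so `f` gives them the same
letter at position `1`, although exactly one of them contains a `true`.
-/

def HasDelayOn {α β : Type*} (T : Set (ℕ → α)) (d : ℕ) (f : (ℕ → α) → ℕ → β) : Prop :=
  ∀ t ∈ T, ∀ t' ∈ T, ∀ n : ℕ, (∀ k < n + d, t k = t' k) → ∀ k < n, f t k = f t' k

theorem HasDelayOn.apply_eq {α β : Type*} {T : Set (ℕ → α)} {d : ℕ} {f : (ℕ → α) → ℕ → β}
    (hf : HasDelayOn T d f) {t t' : ℕ → α} (ht : t ∈ T) (ht' : t' ∈ T) (k : ℕ)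
    (h : ∀ i < k + 1 + d, t i = t' i) : f t k = f t' k :=
  hf t ht t' ht' (k + 1) h k k.lt_succ_self

/-- With `T = { t : ℕ → Bool | t 0 = false }`, there is no `d : ℕ` and no
`f : (ℕ → Bool) → (ℕ → Bool)` such that (i) `f` has delay `d` on `T` (inputs agreeing on
their first `n + d` letters yield outputs agreeing on their first `n` letters) and
(ii) for every `t ∈ T`, `f t ∈ T` and `(∃ n, t n = true) ↔ (f t) 1 = true`. -/
theorem no_bounded_delay_skolem :
    ¬ ∃ (d : ℕ) (f : (ℕ → Bool) → (ℕ → Bool)),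
      (∀ t ∈ {t : ℕ → Bool | t 0 = false}, ∀ t' ∈ {t : ℕ → Bool | t 0 = false},
        ∀ n : ℕ, (∀ k < n + d, t k = t' k) → ∀ k < n, f t k = f t' k) ∧
      (∀ t ∈ {t : ℕ → Bool | t 0 = false},
        f t ∈ {t : ℕ → Bool | t 0 = false} ∧ ((∃ n, t n = true) ↔ (f t) 1 = true)) := by
  rintro ⟨d, f, hdelay, hspec⟩
  let silent : ℕ → Bool := fun _ => false
  let late : ℕ → Bool := fun i => decide (i = 1 + 1 + d)
  have hsilent : silent 0 = false := rfl
  have hlate : late 0 = false := decide_eq_false (by omega)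
  have hsame : f silent 1 = f late 1 :=
    HasDelayOn.apply_eq hdelay hsilent hlate 1 fun i hi => (decide_eq_false hi.ne).symm
  have hsilent_out : f silent 1 = false := by
    simpa [silent] using (hspec silent hsilent).2
  have hlate_out : f late 1 = true := (hspec late hlate).2.mp ⟨1 + 1 + d, decide_eq_true rfl⟩
  simp [hsilent_out, hlate_out] at hsame
end

section
/- Let A = (Q, q_I, δ, F) be a Büchi automaton over an alphabet A with Q finite, and let w, w′ : ℕ → A be infinite words. Suppose there are strictly monotone functions c, c′ : ℕ → ℕ with c 0 = 0 and c′ 0 = 0 such that for every n, writing u_n for the finite word w(c n) w(c n + 1) ⋯ w(c (n+1) − 1) and u′_n for w′(c′ n) ⋯ w′(c′ (n+1) − 1), the blocks u_n and u′_n induce the same state transformations: for all states p, q ∈ Q, (p →^{u_n} q ↔ p →^{u′_n} q) and (p ⇒^{u_n} q ↔ p ⇒^{u′_n} q). Then w is accepted by A if and only if w′ is accepted by A. -/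
/-- `p →^{u} q`: the Büchi automaton with transition function `δ` has a run from `p`
to `q` processing the finite word `u`. -/
def BuchiReaches {Q A : Type*} (δ : Q → A → Set Q) (p : Q) (u : List A) (q : Q) : Prop :=
  ∃ r : ℕ → Q, r 0 = p ∧ r u.length = q ∧
    ∀ j (hj : j < u.length), r (j + 1) ∈ δ (r j) (u.get ⟨j, hj⟩)

/-- `p ⇒^{u} q`: as `BuchiReaches`, but the run additionally visits an accepting state. -/
def BuchiReachesAcc {Q A : Type*} (δ : Q → A → Set Q) (F : Set Q)
    (p : Q) (u : List A) (q : Q) : Prop :=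
  ∃ r : ℕ → Q, r 0 = p ∧ r u.length = q ∧
    (∀ j (hj : j < u.length), r (j + 1) ∈ δ (r j) (u.get ⟨j, hj⟩)) ∧
    ∃ j ≤ u.length, r j ∈ F

/-- The infinite word `w` is accepted by the Büchi automaton `(Q, qI, δ, F)`. -/
def BuchiAccepts {Q A : Type*} (qI : Q) (δ : Q → A → Set Q) (F : Set Q) (w : ℕ → A) : Prop :=
  ∃ ρ : ℕ → Q, ρ 0 = qI ∧ (∀ n, ρ (n + 1) ∈ δ (ρ n) (w n)) ∧
    ∀ N : ℕ, ∃ n ≥ N, ρ n ∈ F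

/-- The `n`-th block `w(c n) w(c n + 1) ⋯ w(c (n+1) − 1)` of the infinite word `w`
with respect to the factorization `c`. -/
def wordBlock {A : Type*} (w : ℕ → A) (c : ℕ → ℕ) (n : ℕ) : List A :=
  (List.range (c (n + 1) - c n)).map (fun j => w (c n + j))

/-!
Cutting an accepting run of `w` at the positions `c n` yields states `v n` such that each
block `wordBlock w c n` leads from `v n` to `v (n + 1)`, infinitely often through an accepting
state; conversely, runs through the blocks witnessing these facts glue back to an accepting run
of `w`. So acceptance depends only on the transformations induced by the blocks, which `w` and
`w'` share.
-/

lemma StrictMono.exists_mem_Ico_succ {c : ℕ → ℕ} (hc : StrictMono c) {m : ℕ} (hm : c 0 ≤ m) :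
    ∃ k, m ∈ Set.Ico (c k) (c (k + 1)) := by
  induction m, hm using Nat.le_induction with
  | base => exact ⟨0, le_rfl, hc (Nat.lt_succ_self 0)⟩
  | succ m _ ih =>
    obtain ⟨k, hkm, hmk⟩ := ih
    rcases (show m + 1 ≤ c (k + 1) from hmk).lt_or_eq with hlt | heq
    · exact ⟨k, by omega, hlt⟩
    · exact ⟨k + 1, heq.ge, by rw [heq]; exact hc (Nat.lt_succ_self _)⟩

lemma StrictMono.eq_of_mem_Ico_succ {c : ℕ → ℕ} (hc : StrictMono c) {m k l : ℕ}
    (hk : m ∈ Set.Ico (c k) (c (k + 1))) (hl : m ∈ Set.Ico (c l) (c (l + 1))) : k = l := by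
  have hkl : k < l + 1 := hc.lt_iff_lt.mp (hk.1.trans_lt hl.2)
  have hlk : l < k + 1 := hc.lt_iff_lt.mp (hl.1.trans_lt hk.2)
  omega

lemma StrictMono.exists_glue {X : Type*} {c : ℕ → ℕ} (hc : StrictMono c) (hc0 : c 0 = 0)
    (r : ℕ → ℕ → X) (hr : ∀ n, r n (c (n + 1) - c n) = r (n + 1) 0) :
    ∃ ρ : ℕ → X, ∀ n j, j ≤ c (n + 1) - c n → ρ (c n + j) = r n j := by
  choose idx hidx using fun m => hc.exists_mem_Ico_succ (hc0 ▸ Nat.zero_le m)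
  refine ⟨fun m => r (idx m) (m - c (idx m)), fun n j hj => ?_⟩
  have hcn : c n < c (n + 1) := hc (Nat.lt_succ_self n)
  rcases hj.lt_or_eq with hlt | rfl
  · have hn : idx (c n + j) = n := hc.eq_of_mem_Ico_succ (hidx _) ⟨by omega, by omega⟩
    simp only [hn, Nat.add_sub_cancel_left]
  · have hn : idx (c n + (c (n + 1) - c n)) = n + 1 :=
      hc.eq_of_mem_Ico_succ (hidx _)
        ⟨by omega, by rw [Nat.add_sub_cancel' hcn.le]; exact hc (by omega)⟩
    show r (idx _) (_ - c (idx _)) = _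
    rw [hn, Nat.add_sub_cancel' hcn.le, Nat.sub_self, hr]

section Buchi

variable {Q A : Type*}

/-- Büchi acceptance of the concatenation `u 0 ++ u 1 ++ ⋯`, phrased through the
transformations induced by the blocks. -/
def BuchiAcceptsBlocks (qI : Q) (δ : Q → A → Set Q) (F : Set Q) (u : ℕ → List A) : Prop :=
  ∃ v : ℕ → Q, v 0 = qI ∧ (∀ n, BuchiReaches δ (v n) (u n) (v (n + 1))) ∧
    ∀ N, ∃ n ≥ N, BuchiReachesAcc δ F (v n) (u n) (v (n + 1))

lemma BuchiAcceptsBlocks.of_forall_imp {qI : Q} {δ : Q → A → Set Q} {F : Set Q}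
    {u u' : ℕ → List A} (h : BuchiAcceptsBlocks qI δ F u)
    (hreach : ∀ n p q, BuchiReaches δ p (u n) q → BuchiReaches δ p (u' n) q)
    (hacc : ∀ n p q, BuchiReachesAcc δ F p (u n) q → BuchiReachesAcc δ F p (u' n) q) :
    BuchiAcceptsBlocks qI δ F u' := by
  obtain ⟨v, hv0, hv, hvF⟩ := h
  refine ⟨v, hv0, fun n => hreach n _ _ (hv n), fun N => ?_⟩
  obtain ⟨n, hnN, hn⟩ := hvF N
  exact ⟨n, hnN, hacc n _ _ hn⟩

lemma buchiAcceptsBlocks_congr {qI : Q} {δ : Q → A → Set Q} {F : Set Q}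
    {u u' : ℕ → List A}
    (h : ∀ n p q, (BuchiReaches δ p (u n) q ↔ BuchiReaches δ p (u' n) q) ∧
      (BuchiReachesAcc δ F p (u n) q ↔ BuchiReachesAcc δ F p (u' n) q)) :
    BuchiAcceptsBlocks qI δ F u ↔ BuchiAcceptsBlocks qI δ F u' :=
  ⟨fun hu => hu.of_forall_imp (fun n p q => (h n p q).1.mp) (fun n p q => (h n p q).2.mp),
    fun hu => hu.of_forall_imp (fun n p q => (h n p q).1.mpr) (fun n p q => (h n p q).2.mpr)⟩

@[simp]
lemma wordBlock_length (w : ℕ → A) (c : ℕ → ℕ) (n : ℕ) :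
    (wordBlock w c n).length = c (n + 1) - c n := by
  simp [wordBlock]

@[simp]
lemma wordBlock_getElem (w : ℕ → A) (c : ℕ → ℕ) (n j : ℕ) (hj : j < (wordBlock w c n).length) :
    (wordBlock w c n)[j] = w (c n + j) := by
  simp [wordBlock]

variable {δ : Q → A → Set Q} {F : Set Q} {w : ℕ → A} {c : ℕ → ℕ} {ρ : ℕ → Q}

lemma buchiReaches_wordBlock_of_run (hρ : ∀ m, ρ (m + 1) ∈ δ (ρ m) (w m)) {n : ℕ}
    (hle : c n ≤ c (n + 1)) : BuchiReaches δ (ρ (c n)) (wordBlock w c n) (ρ (c (n + 1))) :=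
  ⟨fun j => ρ (c n + j), rfl, by simp [Nat.add_sub_cancel' hle],
    fun j _ => by simpa [← add_assoc] using hρ (c n + j)⟩

lemma buchiReachesAcc_wordBlock_of_run (hρ : ∀ m, ρ (m + 1) ∈ δ (ρ m) (w m)) {n m : ℕ}
    (hm : m ∈ Set.Icc (c n) (c (n + 1))) (hmF : ρ m ∈ F) :
    BuchiReachesAcc δ F (ρ (c n)) (wordBlock w c n) (ρ (c (n + 1))) := by
  have hle : c n ≤ c (n + 1) := hm.1.trans hm.2
  refine ⟨fun j => ρ (c n + j), rfl, by simp [Nat.add_sub_cancel' hle],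
    fun j _ => by simpa [← add_assoc] using hρ (c n + j), m - c n,
    by simpa using Nat.sub_le_sub_right hm.2 _, ?_⟩
  simpa [Nat.add_sub_cancel' hm.1] using hmF

lemma BuchiAccepts.buchiAcceptsBlocks {qI : Q} (h : BuchiAccepts qI δ F w)
    (hc : StrictMono c) (hc0 : c 0 = 0) : BuchiAcceptsBlocks qI δ F (wordBlock w c) := by
  obtain ⟨ρ, hρ0, hρ, hρF⟩ := h
  refine ⟨ρ ∘ c, by simp [hc0, hρ0],
    fun n => buchiReaches_wordBlock_of_run hρ (hc (Nat.lt_succ_self n)).le, fun N => ?_⟩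
  obtain ⟨m, hmN, hmF⟩ := hρF (c N)
  obtain ⟨k, hk⟩ := hc.exists_mem_Ico_succ (hc0 ▸ Nat.zero_le m)
  have hNk : N < k + 1 := hc.lt_iff_lt.mp (hmN.trans_lt hk.2)
  exact ⟨k, by omega, buchiReachesAcc_wordBlock_of_run hρ (Set.Ico_subset_Icc_self hk) hmF⟩

lemma BuchiReaches.exists_run_acc {p q : Q} {u : List A} (h : BuchiReaches δ p u q) :
    ∃ r : ℕ → Q, r 0 = p ∧ r u.length = q ∧
      (∀ j (hj : j < u.length), r (j + 1) ∈ δ (r j) (u.get ⟨j, hj⟩)) ∧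
      (BuchiReachesAcc δ F p u q → ∃ j ≤ u.length, r j ∈ F) := by
  by_cases hacc : BuchiReachesAcc δ F p u q
  · obtain ⟨r, hr0, hrq, hr, hrF⟩ := hacc
    exact ⟨r, hr0, hrq, hr, fun _ => hrF⟩
  · obtain ⟨r, hr0, hrq, hr⟩ := h
    exact ⟨r, hr0, hrq, hr, fun h => absurd h hacc⟩

lemma BuchiAcceptsBlocks.buchiAccepts {qI : Q} (h : BuchiAcceptsBlocks qI δ F (wordBlock w c))
    (hc : StrictMono c) (hc0 : c 0 = 0) : BuchiAccepts qI δ F w := by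
  obtain ⟨v, hv0, hv, hvF⟩ := h
  choose r hr0 hrlen hr hrF using fun n => (hv n).exists_run_acc (F := F)
  simp only [wordBlock_length, List.get_eq_getElem, wordBlock_getElem] at hrlen hr hrF
  obtain ⟨ρ, hρ⟩ := hc.exists_glue hc0 r fun n => (hrlen n).trans (hr0 (n + 1)).symm
  refine ⟨ρ, ?_, fun m => ?_, fun N => ?_⟩
  · simpa [hc0, hr0, hv0] using hρ 0 0 (Nat.zero_le _)
  · obtain ⟨k, hk⟩ := hc.exists_mem_Ico_succ (hc0 ▸ Nat.zero_le m)
    obtain ⟨j, rfl⟩ := Nat.exists_eq_add_of_le hk.1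
    have hj : j < c (k + 1) - c k := by have := hk.2; omega
    rw [add_assoc, hρ k j hj.le, hρ k (j + 1) hj]
    exact hr k j hj
  · obtain ⟨n, hnN, hn⟩ := hvF N
    obtain ⟨j, hj, hjF⟩ := hrF n hn
    exact ⟨c n + j, hnN.trans (hc.le_apply.trans (Nat.le_add_right _ _)), (hρ n j hj).symm ▸ hjF⟩

lemma buchiAccepts_iff_buchiAcceptsBlocks {qI : Q} (hc : StrictMono c) (hc0 : c 0 = 0) :
    BuchiAccepts qI δ F w ↔ BuchiAcceptsBlocks qI δ F (wordBlock w c) :=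
  ⟨fun h => h.buchiAcceptsBlocks hc hc0, fun h => h.buchiAccepts hc hc0⟩

end Buchi

theorem buchi_accepts_of_blockwise_equiv_general {Q A : Type*}
    (qI : Q) (δ : Q → A → Set Q) (F : Set Q)
    (w w' : ℕ → A) (c c' : ℕ → ℕ)
    (hc : StrictMono c) (hc' : StrictMono c') (hc0 : c 0 = 0) (hc0' : c' 0 = 0)
    (hblocks : ∀ n : ℕ, ∀ p q : Q,
      (BuchiReaches δ p (wordBlock w c n) q ↔ BuchiReaches δ p (wordBlock w' c' n) q) ∧
      (BuchiReachesAcc δ F p (wordBlock w c n) q ↔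
        BuchiReachesAcc δ F p (wordBlock w' c' n) q)) :
    BuchiAccepts qI δ F w ↔ BuchiAccepts qI δ F w' := by
  rw [buchiAccepts_iff_buchiAcceptsBlocks hc hc0, buchiAccepts_iff_buchiAcceptsBlocks hc' hc0']
  exact buchiAcceptsBlocks_congr hblocks

/-- If the infinite words `w` and `w′` admit factorizations into blocks
(via strictly monotone `c, c′` with `c 0 = c′ 0 = 0`) such that corresponding blocks
induce the same state transformations (both plain and with an accepting-state visit),
then `w` is accepted by the Büchi automaton iff `w′` is. -/
theorem buchi_accepts_of_blockwise_equiv {Q A : Type*} [Finite Q]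
    (qI : Q) (δ : Q → A → Set Q) (F : Set Q)
    (w w' : ℕ → A) (c c' : ℕ → ℕ)
    (hc : StrictMono c) (hc' : StrictMono c') (hc0 : c 0 = 0) (hc0' : c' 0 = 0)
    (hblocks : ∀ n : ℕ, ∀ p q : Q,
      (BuchiReaches δ p (wordBlock w c n) q ↔ BuchiReaches δ p (wordBlock w' c' n) q) ∧
      (BuchiReachesAcc δ F p (wordBlock w c n) q ↔
        BuchiReachesAcc δ F p (wordBlock w' c' n) q)) :
    BuchiAccepts qI δ F w ↔ BuchiAccepts qI δ F w' :=
  buchi_accepts_of_blockwise_equiv_general qI δ F w w' c c' hc hc' hc0 hc0' hblocks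
end

section
/- Let A and B be types and let E be an equivalence relation on List (A × B) of finite index m. Define the relation E′ on List A by: w E′ w′ iff (a) for every v : List B with v.length = w.length there exists v′ : List B with v′.length = w′.length such that (w.zip v) E (w′.zip v′), and (b) for every v′ : List B with v′.length = w′.length there exists v : List B with v.length = w.length such that (w.zip v) E (w′.zip v′). Then E′ is an equivalence relation on List A of finite index, and the number of its equivalence classes is at most 2^m. (This is the induction step showing that each of the relations ≈ᵢ derived from ≈_{i+1} by quantifying over completions is an equivalence relation of finite index.) -/
/-!
`w E′ w′` holds exactly when `w` and `w′` have the same set of `E`-classes of completions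
`w.zip v`. So `E′` is the kernel of a map from `List A` into the power set of the `m`
classes of `E`, hence an equivalence relation with at most `2 ^ m` classes.
-/

/-- The relation `E′` on `List A` derived from a relation `E` on `List (A × B)` by
quantifying over completions: `w E′ w′` iff every completion of one side can be matched
by a completion of the other side so that the zipped words are `E`-equivalent. -/
def CompletionRel {A B : Type*} (E : List (A × B) → List (A × B) → Prop)
    (w w' : List A) : Prop :=
  (∀ v : List B, v.length = w.length →
    ∃ v' : List B, v'.length = w'.length ∧ E (w.zip v) (w'.zip v')) ∧
  (∀ v' : List B, v'.length = w'.length →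
    ∃ v : List B, v.length = w.length ∧ E (w.zip v) (w'.zip v'))

section CompletionClasses

variable {A B : Type*} {E : List (A × B) → List (A × B) → Prop} (hE : Equivalence E)

def completionClasses (w : List A) : Set (Quotient ⟨E, hE⟩) :=
  {q | ∃ v : List B, v.length = w.length ∧ ⟦w.zip v⟧ = q}

theorem completionRel_iff_completionClasses_eq (w w' : List A) :
    CompletionRel E w w' ↔ completionClasses hE w = completionClasses hE w' := by
  constructor
  · rintro ⟨matchLeft, matchRight⟩
    ext q
    constructor
    · rintro ⟨v, hv, rfl⟩
      obtain ⟨v', hv', hvv'⟩ := matchLeft v hv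
      exact ⟨v', hv', (Quotient.sound hvv').symm⟩
    · rintro ⟨v', hv', rfl⟩
      obtain ⟨v, hv, hvv'⟩ := matchRight v' hv'
      exact ⟨v, hv, Quotient.sound hvv'⟩
  · intro h
    refine ⟨fun v hv => ?_, fun v' hv' => ?_⟩
    · obtain ⟨v', hv', hq⟩ : ⟦w.zip v⟧ ∈ completionClasses hE w' := h ▸ ⟨v, hv, rfl⟩
      exact ⟨v', hv', Quotient.exact hq.symm⟩
    · obtain ⟨v, hv, hq⟩ : ⟦w'.zip v'⟧ ∈ completionClasses hE w := h ▸ ⟨v', hv', rfl⟩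
      exact ⟨v, hv, Quotient.exact hq⟩

theorem equivalence_completionRel (hE : Equivalence E) : Equivalence (CompletionRel E) := by
  have hker : CompletionRel E = (Setoid.ker (completionClasses hE)).r := by
    ext w w'
    exact completionRel_iff_completionClasses_eq hE w w'
  exact hker ▸ (Setoid.ker _).iseqv

theorem mk_completionRel_eq_ker :
    Setoid.mk (CompletionRel E) (equivalence_completionRel hE) =
      Setoid.ker (completionClasses hE) :=
  Setoid.ext (completionRel_iff_completionClasses_eq hE)

end CompletionClasses

theorem Setoid.finite_quotient_ker_and_card_le {α β : Type*} [Finite β] (f : α → β) :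
    Finite (Quotient (Setoid.ker f)) ∧ Nat.card (Quotient (Setoid.ker f)) ≤ Nat.card β :=
  ⟨Finite.of_injective _ (Setoid.kerLift_injective f),
    Nat.card_le_card_of_injective _ (Setoid.kerLift_injective f)⟩

theorem Nat.card_set {α : Type*} [Finite α] : Nat.card (Set α) = 2 ^ Nat.card α := by
  have := Fintype.ofFinite α
  rw [Nat.card_eq_fintype_card, Fintype.card_set, Nat.card_eq_fintype_card]

/-- If `E` is an equivalence relation on `List (A × B)` of finite index `m`,
then the derived relation `E′ = CompletionRel E` on `List A` is an equivalence relation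
of finite index, with at most `2 ^ m` equivalence classes. -/
theorem completionRel_equivalence_finite_index {A B : Type*}
    (E : List (A × B) → List (A × B) → Prop) (hE : Equivalence E) (m : ℕ)
    (hfin : Finite (Quotient (Setoid.mk E hE)))
    (hcard : Nat.card (Quotient (Setoid.mk E hE)) = m) :
    ∃ hE' : Equivalence (CompletionRel E),
      Finite (Quotient (Setoid.mk (CompletionRel E) hE')) ∧
      Nat.card (Quotient (Setoid.mk (CompletionRel E) hE')) ≤ 2 ^ m := by
  refine ⟨equivalence_completionRel hE, ?_⟩
  rw [mk_completionRel_eq_ker hE, ← hcard, ← Nat.card_set]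
  exact Setoid.finite_quotient_ker_and_card_le _
end

section
/- Fix k ∈ ℕ, an alphabet α, a Büchi automaton (Q, q_I, δ, F) over the alphabet Fin k → α with Q finite, and a transition system (V, E, v_I, λ) with V finite and λ : V → α, and let ≈ be the transformation-profile equivalence on List (Fin k → α) (identical state transformations, identical accepting-visit state transformations, and identical componentwise path transformations). Then every ≈-equivalence class is a regular language recognized by a deterministic finite automaton of bounded size: for every w₀ : List (Fin k → α) there exist a finite type σ with card σ ≤ 3^{(card Q)²} · 2^{k · (card V)²} and a DFA over the alphabet Fin k → α with state type σ whose accepted language equals { w | w ≈ w₀ }. -/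
/-- `x →^{u} y`: the transition system with edge relation `E` and labelling `lab` has a
path from `x` to `y` labelled by the finite word `u`. -/
def TSReaches {V α : Type*} (E : V → V → Prop) (lab : V → α)
    (x : V) (u : List α) (y : V) : Prop :=
  ∃ ρ : ℕ → V, ρ 0 = x ∧ ρ u.length = y ∧
    ∀ j (hj : j < u.length), E (ρ j) (ρ (j + 1)) ∧ lab (ρ j) = u.get ⟨j, hj⟩

/-- The transformation-profile equivalence `≈` on finite words over `Fin k → α`:
identical state transformations, identical accepting-visit state transformations, and
identical componentwise path transformations. -/
def ProfEq {k : ℕ} {α Q V : Type*} (δ : Q → (Fin k → α) → Set Q) (F : Set Q)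
    (E : V → V → Prop) (lab : V → α) (w w' : List (Fin k → α)) : Prop :=
  (∀ p q : Q, BuchiReaches δ p w q ↔ BuchiReaches δ p w' q) ∧
  (∀ p q : Q, BuchiReachesAcc δ F p w q ↔ BuchiReachesAcc δ F p w' q) ∧
  (∀ (j : Fin k) (x y : V),
    TSReaches E lab x (w.map (fun a => a j)) y ↔ TSReaches E lab x (w'.map (fun a => a j)) y)


open Classical in
/-- Encode a pair of propositions (with `Pa → P`) as an element of `Fin 3`. -/
noncomputable def code3 (P Pa : Prop) : Fin 3 :=
  if Pa then 2 else if P then 1 else 0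

lemma code3_ne_zero {P Pa : Prop} (h : Pa → P) : code3 P Pa ≠ 0 ↔ P := by
  classical
  unfold code3
  split_ifs with h1 h2
  · simp [h h1]
  · simp [h2]
  · simp [h2]

lemma code3_eq_two {P Pa : Prop} : code3 P Pa = 2 ↔ Pa := by
  classical
  unfold code3
  split_ifs with h1 h2 <;> simp_all

lemma code3_congr {P Pa P' Pa' : Prop} (h : P ↔ P') (ha : Pa ↔ Pa') :
    code3 P Pa = code3 P' Pa' := by
  classical
  unfold code3
  simp only [h, ha]

open Classical in
noncomputable def boolOf (P : Prop) : Bool := decide P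

lemma boolOf_eq_true {P : Prop} : boolOf P = true ↔ P := by
  classical simp [boolOf]

lemma boolOf_congr {P P' : Prop} (h : P ↔ P') : boolOf P = boolOf P' := by
  classical simp [boolOf, h]

section Reach
variable {Q A : Type*} (δ : Q → A → Set Q) (F : Set Q)

lemma buchiReaches_nil {p q : Q} : BuchiReaches δ p [] q ↔ p = q := by
  constructor
  · rintro ⟨r, h0, hl, -⟩; simp at hl; rw [← h0, ← hl]
  · rintro rfl; exact ⟨fun _ => p, rfl, rfl, fun j hj => by simp at hj⟩

lemma buchiReachesAcc_nil {p q : Q} : BuchiReachesAcc δ F p [] q ↔ p = q ∧ p ∈ F := by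
  constructor
  · rintro ⟨r, h0, hl, -, j, hj, hF⟩
    simp at hl
    have : j = 0 := Nat.le_zero.mp hj
    subst this
    exact ⟨h0 ▸ hl ▸ rfl, h0 ▸ hF⟩
  · rintro ⟨rfl, hF⟩
    exact ⟨fun _ => p, rfl, rfl, fun j hj => by simp at hj, 0, by simp, hF⟩

lemma buchiReaches_append {p q : Q} {u : List A} {a : A} :
    BuchiReaches δ p (u ++ [a]) q ↔ ∃ r', BuchiReaches δ p u r' ∧ q ∈ δ r' a := by
  constructor
  · rintro ⟨r, h0, hl, hs⟩
    simp only [List.length_append, List.length_singleton] at hl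
    refine ⟨r u.length, ⟨r, h0, rfl, fun j hj => ?_⟩, ?_⟩
    · have := hs j (by simpa using Nat.lt_succ_of_lt hj)
      simpa [List.getElem_append, hj] using this
    · have := hs u.length (by simp)
      simp only [List.get_eq_getElem, List.getElem_append, lt_irrefl] at this
      simpa [hl] using this
  · rintro ⟨r', ⟨r, h0, hl, hs⟩, hq⟩
    refine ⟨fun j => if j < u.length + 1 then r j else q, by simp [h0], by simp, ?_⟩
    intro j hj
    simp only [List.length_append, List.length_singleton] at hj
    rcases lt_or_eq_of_le (Nat.lt_succ_iff.mp hj) with h | h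
    · have := hs j h
      simp only [Nat.lt_succ_of_lt h, if_pos, h, Nat.succ_lt_succ h, if_pos]
      simpa [List.getElem_append, h] using this
    · subst h
      simp [List.getElem_append, hl, hq]

lemma buchiReachesAcc_append {p q : Q} {u : List A} {a : A} :
    BuchiReachesAcc δ F p (u ++ [a]) q ↔
      ∃ r', (BuchiReachesAcc δ F p u r' ∧ q ∈ δ r' a) ∨
        (BuchiReaches δ p u r' ∧ q ∈ δ r' a ∧ q ∈ F) := by
  constructor
  · rintro ⟨r, h0, hl, hs, j, hj, hF⟩
    simp only [List.length_append, List.length_singleton] at hl hj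
    have hstep : ∀ j (hj : j < u.length), r (j + 1) ∈ δ (r j) (u.get ⟨j, hj⟩) := by
      intro j hj
      have := hs j (by simpa using Nat.lt_succ_of_lt hj)
      simpa [List.getElem_append, hj] using this
    have hlast : q ∈ δ (r u.length) a := by
      have := hs u.length (by simp)
      simp only [List.get_eq_getElem, List.getElem_append, lt_irrefl] at this
      simpa [hl] using this
    rcases lt_or_eq_of_le hj with h | h
    · exact ⟨r u.length, Or.inl ⟨⟨r, h0, rfl, hstep, j, Nat.lt_succ_iff.mp h, hF⟩, hlast⟩⟩
    · subst h
      exact ⟨r u.length, Or.inr ⟨⟨r, h0, rfl, hstep⟩, hlast, hl ▸ hF⟩⟩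
  · rintro ⟨r', h⟩
    have main : ∀ (r : ℕ → Q), r 0 = p → r u.length = r' →
        (∀ j (hj : j < u.length), r (j + 1) ∈ δ (r j) (u.get ⟨j, hj⟩)) → q ∈ δ r' a →
        ∃ s : ℕ → Q, s 0 = p ∧ s (u ++ [a]).length = q ∧
          (∀ j (hj : j < (u ++ [a]).length), s (j+1) ∈ δ (s j) ((u ++ [a]).get ⟨j, hj⟩)) ∧
          (∀ j ≤ u.length + 1, s j = if j < u.length + 1 then r j else q) := by
      intro r h0 hl hs hq
      refine ⟨fun j => if j < u.length + 1 then r j else q, by simp [h0], by simp, ?_, fun j _ => rfl⟩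
      intro j hj
      simp only [List.length_append, List.length_singleton] at hj
      rcases lt_or_eq_of_le (Nat.lt_succ_iff.mp hj) with h | h
      · have := hs j h
        simp only [Nat.lt_succ_of_lt h, if_pos, Nat.succ_lt_succ h, if_pos]
        simpa [List.getElem_append, h] using this
      · subst h
        simp [List.getElem_append, hl, hq]
    rcases h with ⟨⟨r, h0, hl, hs, j, hj, hF⟩, hq⟩ | ⟨⟨r, h0, hl, hs⟩, hq, hqF⟩
    · obtain ⟨s, hs0, hsl, hss, heq⟩ := main r h0 hl hs hq
      refine ⟨s, hs0, hsl, hss, j, by simp; omega, ?_⟩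
      rw [heq j (by omega)]
      simp [Nat.lt_succ_of_le hj, hF]
    · obtain ⟨s, hs0, hsl, hss, heq⟩ := main r h0 hl hs hq
      refine ⟨s, hs0, hsl, hss, u.length + 1, by simp, ?_⟩
      rw [heq _ le_rfl]; simpa

end Reach

section TS
variable {V α : Type*} (E : V → V → Prop) (lab : V → α)

lemma tsReaches_nil {x y : V} : TSReaches E lab x [] y ↔ x = y := by
  constructor
  · rintro ⟨ρ, h0, hl, -⟩; simp at hl; rw [← h0, ← hl]
  · rintro rfl; exact ⟨fun _ => x, rfl, rfl, fun j hj => by simp at hj⟩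

lemma tsReaches_append {x y : V} {u : List α} {b : α} :
    TSReaches E lab x (u ++ [b]) y ↔
      ∃ z, TSReaches E lab x u z ∧ E z y ∧ lab z = b := by
  constructor
  · rintro ⟨ρ, h0, hl, hs⟩
    simp only [List.length_append, List.length_singleton] at hl
    refine ⟨ρ u.length, ⟨ρ, h0, rfl, fun j hj => ?_⟩, ?_, ?_⟩
    · have := hs j (by simpa using Nat.lt_succ_of_lt hj)
      simpa [List.getElem_append, hj] using this
    · have := (hs u.length (by simp)).1
      simpa [hl] using this
    · have := (hs u.length (by simp)).2
      simpa [List.getElem_append] using this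
  · rintro ⟨z, ⟨ρ, h0, hl, hs⟩, hE, hb⟩
    refine ⟨fun j => if j < u.length + 1 then ρ j else y, by simp [h0], by simp, ?_⟩
    intro j hj
    simp only [List.length_append, List.length_singleton] at hj
    rcases lt_or_eq_of_le (Nat.lt_succ_iff.mp hj) with h | h
    · have := hs j h
      simp only [Nat.lt_succ_of_lt h, if_pos, Nat.succ_lt_succ h, if_pos]
      exact ⟨this.1, by simpa [List.getElem_append, h] using this.2⟩
    · subst h
      simp [List.getElem_append, hl, hE, hb]

end TS

lemma buchiReachesAcc_reaches {Q A : Type*} {δ : Q → A → Set Q} {F : Set Q}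
    {p q : Q} {u : List A} (h : BuchiReachesAcc δ F p u q) : BuchiReaches δ p u q := by
  obtain ⟨r, h0, hl, hs, -⟩ := h
  exact ⟨r, h0, hl, hs⟩

lemma code3_inj {P Pa P' Pa' : Prop} (h : code3 P Pa = code3 P' Pa')
    (hi : Pa → P) (hi' : Pa' → P') : (P ↔ P') ∧ (Pa ↔ Pa') := by
  constructor
  · rw [← code3_ne_zero hi, ← code3_ne_zero hi', h]
  · rw [← @code3_eq_two P Pa, ← @code3_eq_two P' Pa', h]

/-- Every `≈`-equivalence class of the transformation-profile equivalence
is recognized by a DFA with at most `3 ^ (card Q)² · 2 ^ (k · (card V)²)` states. -/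
theorem profEq_class_regular {k : ℕ} {α Q V : Type*} [Fintype Q] [Fintype V]
    (qI : Q) (δ : Q → (Fin k → α) → Set Q) (F : Set Q)
    (E : V → V → Prop) (vI : V) (lab : V → α)
    (w₀ : List (Fin k → α)) :
    ∃ (σ : Type) (_ : Fintype σ) (M : DFA (Fin k → α) σ),
      Fintype.card σ ≤ 3 ^ ((Fintype.card Q) ^ 2) * 2 ^ (k * (Fintype.card V) ^ 2) ∧
      M.accepts = {w : List (Fin k → α) | ProfEq δ F E lab w w₀} := by
  classical
  set nQ := Fintype.card Q with hnQ
  set nV := Fintype.card V with hnV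
  let eQ := Fintype.equivFin Q
  let eV := Fintype.equivFin V
  refine ⟨(Fin nQ × Fin nQ → Fin 3) × (Fin k × Fin nV × Fin nV → Bool), inferInstance, ?_⟩
  -- the profile of a word
  let prof : List (Fin k → α) → (Fin nQ × Fin nQ → Fin 3) × (Fin k × Fin nV × Fin nV → Bool) :=
    fun w =>
      (fun pq => code3 (BuchiReaches δ (eQ.symm pq.1) w (eQ.symm pq.2))
                       (BuchiReachesAcc δ F (eQ.symm pq.1) w (eQ.symm pq.2)),
       fun t => boolOf (TSReaches E lab (eV.symm t.2.1) (w.map (fun a => a t.1)) (eV.symm t.2.2)))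
  let step : ((Fin nQ × Fin nQ → Fin 3) × (Fin k × Fin nV × Fin nV → Bool)) → (Fin k → α) →
      ((Fin nQ × Fin nQ → Fin 3) × (Fin k × Fin nV × Fin nV → Bool)) :=
    fun s a =>
      (fun pq => code3
          (∃ r : Fin nQ, s.1 (pq.1, r) ≠ 0 ∧ eQ.symm pq.2 ∈ δ (eQ.symm r) a)
          (∃ r : Fin nQ, (s.1 (pq.1, r) = 2 ∧ eQ.symm pq.2 ∈ δ (eQ.symm r) a) ∨
             (s.1 (pq.1, r) ≠ 0 ∧ eQ.symm pq.2 ∈ δ (eQ.symm r) a ∧ eQ.symm pq.2 ∈ F)),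
       fun t => boolOf (∃ z : Fin nV, s.2 (t.1, t.2.1, z) = true ∧
           E (eV.symm z) (eV.symm t.2.2) ∧ lab (eV.symm z) = a t.1))
  have key : ∀ (w : List (Fin k → α)) (a : Fin k → α), prof (w ++ [a]) = step (prof w) a := by
    intro w a
    refine Prod.ext (funext fun pq => ?_) (funext fun t => ?_)
    · show code3 _ _ = code3 _ _
      refine code3_congr ?_ ?_
      · rw [buchiReaches_append]
        rw [Equiv.exists_congr_left eQ]
        refine exists_congr fun r => ?_
        rw [code3_ne_zero buchiReachesAcc_reaches]
      · rw [buchiReachesAcc_append]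
        rw [Equiv.exists_congr_left eQ]
        refine exists_congr fun r => ?_
        rw [code3_eq_two, code3_ne_zero buchiReachesAcc_reaches]
    · show boolOf _ = boolOf _
      refine boolOf_congr ?_
      rw [List.map_append, List.map_singleton, tsReaches_append]
      rw [Equiv.exists_congr_left eV]
      refine exists_congr fun z => ?_
      rw [boolOf_eq_true]
  let M : DFA (Fin k → α) ((Fin nQ × Fin nQ → Fin 3) × (Fin k × Fin nV × Fin nV → Bool)) :=
    ⟨step, prof [], {s | s = prof w₀}⟩
  have heval : ∀ w, M.eval w = prof w := by
    intro w
    induction w using List.reverseRecOn with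
    | nil => rfl
    | append_singleton w a ih =>
        rw [DFA.eval, DFA.evalFrom_append_singleton, key]
        show step (M.eval w) a = step (prof w) a
        rw [ih]
  have decode : ∀ w w', prof w = prof w' ↔ ProfEq δ F E lab w w' := by
    intro w w'
    constructor
    · intro h
      refine ⟨fun p q => ?_, fun p q => ?_, fun j x y => ?_⟩
      · have := congrFun (congrArg Prod.fst h) (eQ p, eQ q)
        have h2 := code3_inj this buchiReachesAcc_reaches buchiReachesAcc_reaches
        simpa using h2.1
      · have := congrFun (congrArg Prod.fst h) (eQ p, eQ q)
        have h2 := code3_inj this buchiReachesAcc_reaches buchiReachesAcc_reaches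
        simpa using h2.2
      · have := congrFun (congrArg Prod.snd h) (j, eV x, eV y)
        simp only [prof, Equiv.symm_apply_apply] at this
        rw [← boolOf_eq_true (P := TSReaches E lab x (w.map (fun a => a j)) y), this,
          boolOf_eq_true]
    · rintro ⟨h1, h2, h3⟩
      refine Prod.ext (funext fun pq => ?_) (funext fun t => ?_)
      · exact code3_congr (h1 _ _) (h2 _ _)
      · exact boolOf_congr (h3 _ _ _)
  refine ⟨M, ?_, ?_⟩
  · apply le_of_eq
    simp [Fintype.card_fun, pow_two]
  · ext w
    rw [DFA.mem_accepts, heval]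
    show prof w = prof w₀ ↔ _
    rw [decode]
    rfl
end
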